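/- arXiv:1207.7330 — 7 statements merged into one kernel-verified Lean document; each statement's English description precedes it below -/
import Mathlib

section
/- Let μ, σ > 0, γ > 0 with γ ≠ 1, and 0 ≤ λ < μ. Set a = sqrt(|(γ−1)(μ²−λ²)/(γσ⁴) − (1/2 − μ/σ²)²|) and b = 1/2 − μ/σ² + (γ−1)(μ−λ)/(γσ²). Assume (γ−1)(μ²−λ²)/(γσ⁴) − (1/2 − μ/σ²)² < 0 and |b| < a. Then the function w(y) = (a·tanh(artanh(b/a) − a·y) + (μ/σ² − 1/2))/(γ−1) is differentiable on all of ℝ, satisfies the Riccati ODE with parameters (μ, σ, γ, λ) at every y ∈ ℝ, and satisfies w(0) = (μ−λ)/(γσ²). -/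
/-!
Writing `w = (u + k) / (γ - 1)` with `k = μ / σ² - 1 / 2` turns the Riccati equation into
`u' = u² - a²`, where `a² = k² - (γ - 1)(μ² - λ²) / (γσ⁴)` is positive by hypothesis.
This is solved by `u y = a · tanh (c - a y)`, and `c = artanh (b / a)` gives `u 0 = b`,
which is the initial condition.
-/

open Set

noncomputable def artanh (x : ℝ) : ℝ := (1 / 2) * Real.log ((1 + x) / (1 - x))

theorem tanh_artanh {x : ℝ} (hx : x ∈ Ioo (-1) 1) : Real.tanh (artanh x) = x := by
  rw [artanh, ← Real.artanh_eq_half_log (Ioo_subset_Icc_self hx), Real.tanh_artanh hx]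

namespace Real

theorem hasDerivAt_tanh (x : ℝ) : HasDerivAt tanh (1 - tanh x ^ 2) x := by
  have h := (hasDerivAt_sinh x).div (hasDerivAt_cosh x) (cosh_pos x).ne'
  rw [show sinh / cosh = tanh from funext fun y => (tanh_eq_sinh_div_cosh y).symm] at h
  refine h.congr_deriv ?_
  rw [tanh_eq_sinh_div_cosh]
  field_simp

end Real

theorem hasDerivAt_mul_tanh_sub_mul (a c y : ℝ) :
    HasDerivAt (fun y => a * Real.tanh (c - a * y))
      ((a * Real.tanh (c - a * y)) ^ 2 - a ^ 2) y := by
  have hinner : HasDerivAt (fun y => c - a * y) (-a) y := by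
    simpa using ((hasDerivAt_id y).const_mul a).const_sub c
  refine (((Real.hasDerivAt_tanh (c - a * y)).comp y hinner).const_mul a).congr_deriv ?_
  ring

theorem hasDerivAt_riccati_tanh {g k C a c : ℝ} (hg : g ≠ 1) (ha : a ^ 2 = k ^ 2 - (g - 1) * C)
    {w : ℝ → ℝ} (hw : w = fun y => (a * Real.tanh (c - a * y) + k) / (g - 1)) (y : ℝ) :
    HasDerivAt w ((g - 1) * w y ^ 2 - 2 * k * w y + C) y := by
  have hg' : g - 1 ≠ 0 := sub_ne_zero.mpr hg
  subst hw
  refine (((hasDerivAt_mul_tanh_sub_mul a c y).add_const k).div_const (g - 1)).congr_deriv ?_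
  field_simp
  linear_combination -ha

theorem riccati_tanh_solution_general (μ σ γ lam : ℝ)
    (hγ1 : γ ≠ 1)
    (a b : ℝ)
    (ha : a = Real.sqrt |(γ - 1) * (μ ^ 2 - lam ^ 2) / (γ * σ ^ 4) - (1 / 2 - μ / σ ^ 2) ^ 2|)
    (hb : b = 1 / 2 - μ / σ ^ 2 + (γ - 1) * (μ - lam) / (γ * σ ^ 2))
    (hD : (γ - 1) * (μ ^ 2 - lam ^ 2) / (γ * σ ^ 4) - (1 / 2 - μ / σ ^ 2) ^ 2 < 0)
    (hba : |b| < a)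
    (w : ℝ → ℝ)
    (hw : w = fun y => (a * Real.tanh (artanh (b / a) - a * y) + (μ / σ ^ 2 - 1 / 2)) / (γ - 1)) :
    Differentiable ℝ w ∧
    (∀ y : ℝ, deriv w y + (1 - γ) * (w y) ^ 2 + (2 * μ / σ ^ 2 - 1) * (w y)
        - (μ ^ 2 - lam ^ 2) / (γ * σ ^ 4) = 0) ∧
    w 0 = (μ - lam) / (γ * σ ^ 2) := by
  have ha0 : 0 < a := (abs_nonneg b).trans_lt hba
  have ha2 : a ^ 2 = (μ / σ ^ 2 - 1 / 2) ^ 2 - (γ - 1) * ((μ ^ 2 - lam ^ 2) / (γ * σ ^ 4)) := by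
    rw [ha, Real.sq_sqrt (abs_nonneg _), abs_of_neg hD]
    ring
  have hderiv := hasDerivAt_riccati_tanh hγ1 ha2 hw
  have hba1 : b / a ∈ Ioo (-1) 1 := by
    rw [mem_Ioo, ← abs_lt, abs_div, abs_of_pos ha0, div_lt_one ha0]
    exact hba
  refine ⟨fun y => (hderiv y).differentiableAt, fun y => ?_, ?_⟩
  · rw [(hderiv y).deriv]
    ring
  · rw [hw]
    beta_reduce
    rw [mul_zero, sub_zero, tanh_artanh hba1, mul_div_cancel₀ _ ha0.ne', hb,
      show 1 / 2 - μ / σ ^ 2 + (γ - 1) * (μ - lam) / (γ * σ ^ 2) + (μ / σ ^ 2 - 1 / 2)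
        = (γ - 1) * ((μ - lam) / (γ * σ ^ 2)) by ring]
    exact mul_div_cancel_left₀ _ (sub_ne_zero.mpr hγ1)

/-- the hyperbolic-tangent case of the explicit solution of the
Riccati ODE `w' + (1−γ)w² + (2μ/σ² − 1)w − (μ² − λ²)/(γσ⁴) = 0`
with initial value `w(0) = (μ−λ)/(γσ²)`. -/
theorem riccati_tanh_solution (μ σ γ lam : ℝ)
    (hμ : 0 < μ) (hσ : 0 < σ) (hγ : 0 < γ) (hγ1 : γ ≠ 1)
    (hlam0 : 0 ≤ lam) (hlamμ : lam < μ)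
    (a b : ℝ)
    (ha : a = Real.sqrt |(γ - 1) * (μ ^ 2 - lam ^ 2) / (γ * σ ^ 4) - (1 / 2 - μ / σ ^ 2) ^ 2|)
    (hb : b = 1 / 2 - μ / σ ^ 2 + (γ - 1) * (μ - lam) / (γ * σ ^ 2))
    (hD : (γ - 1) * (μ ^ 2 - lam ^ 2) / (γ * σ ^ 4) - (1 / 2 - μ / σ ^ 2) ^ 2 < 0)
    (hba : |b| < a)
    (w : ℝ → ℝ)
    (hw : w = fun y => (a * Real.tanh (artanh (b / a) - a * y) + (μ / σ ^ 2 - 1 / 2)) / (γ - 1)) :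
    Differentiable ℝ w ∧
    (∀ y : ℝ, deriv w y + (1 - γ) * (w y) ^ 2 + (2 * μ / σ ^ 2 - 1) * (w y)
        - (μ ^ 2 - lam ^ 2) / (γ * σ ^ 4) = 0) ∧
    w 0 = (μ - lam) / (γ * σ ^ 2) :=
  riccati_tanh_solution_general μ σ γ lam hγ1 a b ha hb hD hba w hw
end

section
/- Let μ, σ > 0, γ > 0 with γ ≠ 1, and 0 ≤ λ < μ. Set D = (γ−1)(μ²−λ²)/(γσ⁴) − (1/2 − μ/σ²)², and b = 1/2 − μ/σ² + (γ−1)(μ−λ)/(γσ²). Assume D > 0 and set a = sqrt(D). Then the function w(y) = (a·tan(arctan(b/a) + a·y) + (μ/σ² − 1/2))/(γ−1) is differentiable and satisfies the Riccati ODE with parameters (μ, σ, γ, λ) at every y with arctan(b/a) + a·y ∈ (−π/2, π/2), and satisfies w(0) = (μ−λ)/(γσ²). -/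
/-!
With `t = tan (θ₀ + a y)` we have `t' = a (1 + t²)`, so `w = (a t + c) / k` satisfies
`w' = a² (1 + t²) / k = k w² - 2 c w + (a² + c²) / k`. For the parameters of the theorem
`k = γ - 1`, `c = μ/σ² - 1/2`, and `a² = D` is chosen exactly so that `(a² + c²) / k` is the
constant term `(μ² - λ²)/(γσ⁴)` of the Riccati equation; the phase `arctan (b / a)` gives
`w 0 = (b + c) / k`.
-/

open Real

theorem Real.hasDerivAt_tan_affine {θ₀ a y : ℝ} (hcos : cos (θ₀ + a * y) ≠ 0) :
    HasDerivAt (fun y => tan (θ₀ + a * y)) (a * (1 + tan (θ₀ + a * y) ^ 2)) y := by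
  have hinner : HasDerivAt (fun y => θ₀ + a * y) a y := by
    simpa using ((hasDerivAt_id y).const_mul a).const_add θ₀
  have hsec : 1 / cos (θ₀ + a * y) ^ 2 = 1 + tan (θ₀ + a * y) ^ 2 := by
    rw [one_div, ← inv_one_add_tan_sq hcos, inv_inv]
  have hcomp := (hasDerivAt_tan hcos).comp y hinner
  rw [hsec, mul_comm] at hcomp
  exact hcomp

theorem hasDerivAt_tan_riccati {θ₀ a c k K y : ℝ} (hk : k ≠ 0) (hK : a ^ 2 + c ^ 2 = k * K)
    (hcos : cos (θ₀ + a * y) ≠ 0) :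
    HasDerivAt (fun y => (a * tan (θ₀ + a * y) + c) / k)
      (k * ((a * tan (θ₀ + a * y) + c) / k) ^ 2 - 2 * c * ((a * tan (θ₀ + a * y) + c) / k) + K)
      y := by
  refine ((((hasDerivAt_tan_affine hcos).const_mul a).add_const c).div_const k).congr_deriv ?_
  field_simp
  linear_combination hK

theorem riccati_tan_solution_general (μ σ γ lam : ℝ)
    (hγ1 : γ ≠ 1)
    (D a b : ℝ)
    (hD : D = (γ - 1) * (μ ^ 2 - lam ^ 2) / (γ * σ ^ 4) - (1 / 2 - μ / σ ^ 2) ^ 2)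
    (hb : b = 1 / 2 - μ / σ ^ 2 + (γ - 1) * (μ - lam) / (γ * σ ^ 2))
    (hDpos : 0 < D)
    (ha : a = Real.sqrt D)
    (w : ℝ → ℝ)
    (hw : w = fun y => (a * Real.tan (Real.arctan (b / a) + a * y) + (μ / σ ^ 2 - 1 / 2)) / (γ - 1)) :
    (∀ y : ℝ, Real.arctan (b / a) + a * y ∈ Set.Ioo (-(Real.pi / 2)) (Real.pi / 2) →
      DifferentiableAt ℝ w y ∧
      deriv w y + (1 - γ) * (w y) ^ 2 + (2 * μ / σ ^ 2 - 1) * (w y)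
        - (μ ^ 2 - lam ^ 2) / (γ * σ ^ 4) = 0) ∧
    w 0 = (μ - lam) / (γ * σ ^ 2) := by
  have hk : γ - 1 ≠ 0 := sub_ne_zero.mpr hγ1
  have ha0 : a ≠ 0 := (ha ▸ sqrt_pos.mpr hDpos).ne'
  have hK : a ^ 2 + (μ / σ ^ 2 - 1 / 2) ^ 2 = (γ - 1) * ((μ ^ 2 - lam ^ 2) / (γ * σ ^ 4)) := by
    rw [ha, sq_sqrt hDpos.le, hD]
    ring
  subst hw
  refine ⟨fun y hy => ?_, ?_⟩
  · have hderiv := hasDerivAt_tan_riccati hk hK (cos_pos_of_mem_Ioo hy).ne'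
    refine ⟨hderiv.differentiableAt, ?_⟩
    rw [hderiv.deriv]
    ring
  · simp only [mul_zero, add_zero, tan_arctan, mul_div_cancel₀ _ ha0, hb]
    field_simp
    ring

/-- the tangent case of the explicit solution of the
Riccati ODE `w' + (1−γ)w² + (2μ/σ² − 1)w − (μ² − λ²)/(γσ⁴) = 0`
with initial value `w(0) = (μ−λ)/(γσ²)`. -/
theorem riccati_tan_solution (μ σ γ lam : ℝ)
    (hμ : 0 < μ) (hσ : 0 < σ) (hγ : 0 < γ) (hγ1 : γ ≠ 1)
    (hlam0 : 0 ≤ lam) (hlamμ : lam < μ)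
    (D a b : ℝ)
    (hD : D = (γ - 1) * (μ ^ 2 - lam ^ 2) / (γ * σ ^ 4) - (1 / 2 - μ / σ ^ 2) ^ 2)
    (hb : b = 1 / 2 - μ / σ ^ 2 + (γ - 1) * (μ - lam) / (γ * σ ^ 2))
    (hDpos : 0 < D)
    (ha : a = Real.sqrt D)
    (w : ℝ → ℝ)
    (hw : w = fun y => (a * Real.tan (Real.arctan (b / a) + a * y) + (μ / σ ^ 2 - 1 / 2)) / (γ - 1)) :
    (∀ y : ℝ, Real.arctan (b / a) + a * y ∈ Set.Ioo (-(Real.pi / 2)) (Real.pi / 2) →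
      DifferentiableAt ℝ w y ∧
      deriv w y + (1 - γ) * (w y) ^ 2 + (2 * μ / σ ^ 2 - 1) * (w y)
        - (μ ^ 2 - lam ^ 2) / (γ * σ ^ 4) = 0) ∧
    w 0 = (μ - lam) / (γ * σ ^ 2) :=
  riccati_tan_solution_general μ σ γ lam hγ1 D a b hD hb hDpos ha w hw
end

section
/- Let μ, σ > 0, γ > 0 with γ ≠ 1, 0 < λ < μ, ε ∈ (0,1), and assume μ/(γσ²) ∈ (0,1). Set p = (μ−λ)/(γσ²), q = (μ+λ)/(γσ²), assume 0 < p < μ/(γσ²) < q < 1, and set l = p/(1−p), u = (1/(1−ε))·q/(1−q), L = log(u/l), and assume L > 0. Let w be twice continuously differentiable on [0, L], satisfy the Riccati ODE with parameters (μ, σ, γ, λ) on [0, L], satisfy w(0) = p and w(L) = q, and be nondecreasing with values in [p, q]. Define g(y) = w(y)/(l·e^{y}·(1 − w(y))). Then g'(y) ≤ 0 for all y ∈ [0, L], and consequently 1 − ε ≤ g(y) ≤ 1 for all y ∈ [0, L]. -/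
/-!
With `p, q` the two roots of the Riccati drift, the ODE reads
`w' = w (1 - w) + γ (w - p)(w - q)`, so `w' ≤ w (1 - w)` while `w` stays in `[p, q]`.
Since `g = e^{-y} w / (l (1 - w))`, its derivative is `(w' - w (1 - w)) / (l e^y (1 - w)²) ≤ 0`;
hence `g` decreases from `g 0 = 1` (the choice of `l`) to `g L = 1 - ε`
(the choice of `u` and `L`).
-/

open Set Real

section Riccati

variable {μ σ γ lam : ℝ}

lemma riccati_eq_logistic_add (hσ : σ ≠ 0) (hγ : γ ≠ 0) (x x' : ℝ) :
    x' + (1 - γ) * x ^ 2 + (2 * μ / σ ^ 2 - 1) * x - (μ ^ 2 - lam ^ 2) / (γ * σ ^ 4)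
      = x' - x * (1 - x)
        - γ * ((x - (μ - lam) / (γ * σ ^ 2)) * (x - (μ + lam) / (γ * σ ^ 2))) := by
  field_simp
  ring

lemma le_logistic_of_riccati_eq_zero (hσ : σ ≠ 0) (hγ : 0 < γ) {x x' : ℝ}
    (hode : x' + (1 - γ) * x ^ 2 + (2 * μ / σ ^ 2 - 1) * x
      - (μ ^ 2 - lam ^ 2) / (γ * σ ^ 4) = 0)
    (hx : x ∈ Icc ((μ - lam) / (γ * σ ^ 2)) ((μ + lam) / (γ * σ ^ 2))) :
    x' ≤ x * (1 - x) := by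
  rw [riccati_eq_logistic_add hσ hγ.ne'] at hode
  have : γ * ((x - (μ - lam) / (γ * σ ^ 2)) * (x - (μ + lam) / (γ * σ ^ 2))) ≤ 0 :=
    mul_nonpos_of_nonneg_of_nonpos hγ.le
      (mul_nonpos_of_nonneg_of_nonpos (by linarith [hx.1]) (by linarith [hx.2]))
  linarith

end Riccati

section Deviation

variable {w w' : ℝ → ℝ} {l : ℝ} {s : Set ℝ}

lemma hasDerivWithinAt_deviation {x' y : ℝ} (hw : HasDerivWithinAt w x' s y) (hl : l ≠ 0)
    (hw1 : w y ≠ 1) :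
    HasDerivWithinAt (fun y => w y / (l * exp y * (1 - w y)))
      ((x' - w y * (1 - w y)) / (l * exp y * (1 - w y) ^ 2)) s y := by
  have h1w : 1 - w y ≠ 0 := sub_ne_zero.2 (Ne.symm hw1)
  refine (hw.div (((hasDerivAt_exp y).const_mul l).hasDerivWithinAt.mul (hw.const_sub 1))
    (mul_ne_zero (mul_ne_zero hl (exp_pos y).ne') h1w)).congr_deriv ?_
  simp only [Pi.mul_apply]
  field_simp
  ring

lemma deviation_deriv_nonpos {x x' y : ℝ} (hl : 0 < l) (h : x' ≤ x * (1 - x)) :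
    (x' - x * (1 - x)) / (l * exp y * (1 - x) ^ 2) ≤ 0 :=
  div_nonpos_of_nonpos_of_nonneg (by linarith) (by positivity)

lemma antitoneOn_deviation (hs : Convex ℝ s) (hw : ∀ y ∈ s, HasDerivWithinAt w (w' y) s y)
    (hl : 0 < l) (hw1 : ∀ y ∈ s, w y ≠ 1) (hlog : ∀ y ∈ s, w' y ≤ w y * (1 - w y)) :
    AntitoneOn (fun y => w y / (l * exp y * (1 - w y))) s := by
  have hd y (hy : y ∈ s) := hasDerivWithinAt_deviation (hw y hy) hl.ne' (hw1 y hy)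
  refine antitoneOn_of_hasDerivWithinAt_nonpos hs (fun y hy => (hd y hy).continuousWithinAt)
    (fun y hy => (hd y (interior_subset hy)).mono interior_subset) fun y hy => ?_
  exact deviation_deriv_nonpos hl (hlog y (interior_subset hy))

end Deviation

theorem shadow_price_in_spread_general (μ σ γ lam ε : ℝ)
    (hσ : 0 < σ) (hγ : 0 < γ)
    (hε : ε ∈ Set.Ioo (0 : ℝ) 1)
    (p q : ℝ)
    (hp : p = (μ - lam) / (γ * σ ^ 2)) (hq : q = (μ + lam) / (γ * σ ^ 2))
    (hp0 : 0 < p) (hq1 : q < 1)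
    (l u L : ℝ)
    (hl : l = p / (1 - p)) (hu : u = (1 / (1 - ε)) * (q / (1 - q)))
    (hL : L = Real.log (u / l)) (hLpos : 0 < L)
    (w w' : ℝ → ℝ)
    (hderiv : ∀ y ∈ Set.Icc (0 : ℝ) L, HasDerivWithinAt w (w' y) (Set.Icc (0 : ℝ) L) y)
    (hode : ∀ y ∈ Set.Icc (0 : ℝ) L,
      w' y + (1 - γ) * (w y) ^ 2 + (2 * μ / σ ^ 2 - 1) * (w y)
        - (μ ^ 2 - lam ^ 2) / (γ * σ ^ 4) = 0)
    (hw0 : w 0 = p) (hwL : w L = q)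
    (hrange : ∀ y ∈ Set.Icc (0 : ℝ) L, w y ∈ Set.Icc p q)
    (g : ℝ → ℝ)
    (hg : g = fun y => w y / (l * Real.exp y * (1 - w y))) :
    (∀ y ∈ Set.Icc (0 : ℝ) L, derivWithin g (Set.Icc (0 : ℝ) L) y ≤ 0) ∧
    (∀ y ∈ Set.Icc (0 : ℝ) L, 1 - ε ≤ g y ∧ g y ≤ 1) := by
  have h0 : (0 : ℝ) ∈ Icc 0 L := ⟨le_rfl, hLpos.le⟩
  have hL' : L ∈ Icc 0 L := ⟨hLpos.le, le_rfl⟩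
  have hpq : p ≤ q := (hwL ▸ hrange L hL').1
  have hl0 : 0 < l := hl ▸ div_pos hp0 (by linarith)
  have hu0 : 0 < u := hu ▸ mul_pos (by simp [hε.2]) (div_pos (by linarith) (by linarith))
  have hw1 y (hy : y ∈ Icc 0 L) : w y ≠ 1 := ((hrange y hy).2.trans_lt hq1).ne
  have hlog y (hy : y ∈ Icc 0 L) : w' y ≤ w y * (1 - w y) :=
    le_logistic_of_riccati_eq_zero hσ.ne' hγ (hode y hy) (hp ▸ hq ▸ hrange y hy)
  have hanti := antitoneOn_deviation (convex_Icc 0 L) hderiv hl0 hw1 hlog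
  subst hg
  have hg0 : w 0 / (l * exp 0 * (1 - w 0)) = 1 := by
    rw [hw0, hl, exp_zero]
    field_simp [(by linarith : 1 - p ≠ 0)]
  have hgL : w L / (l * exp L * (1 - w L)) = 1 - ε := by
    rw [hwL, hL, exp_log (div_pos hu0 hl0), hu]
    have hε1 : 1 - ε ≠ 0 := by linarith [hε.2]
    field_simp [(by linarith : q ≠ 0), (by linarith : 1 - q ≠ 0), hε1]
  refine ⟨fun y hy => ?_, fun y hy =>
    ⟨hgL.symm.le.trans (hanti hy hL' hy.2), (hanti h0 hy hy.1).trans hg0.le⟩⟩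
  rw [(hasDerivWithinAt_deviation (hderiv y hy) hl0.ne' (hw1 y hy)).derivWithin
    (uniqueDiffOn_Icc hLpos y hy)]
  exact deviation_deriv_nonpos hl0 (hlog y hy)

/-- the multiplicative deviation `g(y) = w(y)/(l·e^y·(1 − w(y)))`
of the candidate shadow price from the ask price is nonincreasing on `[0, L]`,
and hence the shadow price stays within the bid-ask spread `[(1−ε)S, S]`. -/
theorem shadow_price_in_spread (μ σ γ lam ε : ℝ)
    (hμ : 0 < μ) (hσ : 0 < σ) (hγ : 0 < γ) (hγ1 : γ ≠ 1)
    (hlam0 : 0 < lam) (hlamμ : lam < μ)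
    (hε : ε ∈ Set.Ioo (0 : ℝ) 1)
    (hmerton : μ / (γ * σ ^ 2) ∈ Set.Ioo (0 : ℝ) 1)
    (p q : ℝ)
    (hp : p = (μ - lam) / (γ * σ ^ 2)) (hq : q = (μ + lam) / (γ * σ ^ 2))
    (hp0 : 0 < p) (hpm : p < μ / (γ * σ ^ 2)) (hmq : μ / (γ * σ ^ 2) < q) (hq1 : q < 1)
    (l u L : ℝ)
    (hl : l = p / (1 - p)) (hu : u = (1 / (1 - ε)) * (q / (1 - q)))
    (hL : L = Real.log (u / l)) (hLpos : 0 < L)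
    (w w' w'' : ℝ → ℝ)
    (hderiv : ∀ y ∈ Set.Icc (0 : ℝ) L, HasDerivWithinAt w (w' y) (Set.Icc (0 : ℝ) L) y)
    (hderiv2 : ∀ y ∈ Set.Icc (0 : ℝ) L, HasDerivWithinAt w' (w'' y) (Set.Icc (0 : ℝ) L) y)
    (hcont2 : ContinuousOn w'' (Set.Icc (0 : ℝ) L))
    (hode : ∀ y ∈ Set.Icc (0 : ℝ) L,
      w' y + (1 - γ) * (w y) ^ 2 + (2 * μ / σ ^ 2 - 1) * (w y)
        - (μ ^ 2 - lam ^ 2) / (γ * σ ^ 4) = 0)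
    (hw0 : w 0 = p) (hwL : w L = q)
    (hmono : MonotoneOn w (Set.Icc (0 : ℝ) L))
    (hrange : ∀ y ∈ Set.Icc (0 : ℝ) L, w y ∈ Set.Icc p q)
    (g : ℝ → ℝ)
    (hg : g = fun y => w y / (l * Real.exp y * (1 - w y))) :
    (∀ y ∈ Set.Icc (0 : ℝ) L, derivWithin g (Set.Icc (0 : ℝ) L) y ≤ 0) ∧
    (∀ y ∈ Set.Icc (0 : ℝ) L, 1 - ε ≤ g y ∧ g y ≤ 1) :=
  shadow_price_in_spread_general μ σ γ lam ε hσ hγ hε p q hp hq hp0 hq1 l u L hl hu hL hLpos w w'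
    hderiv hode hw0 hwL hrange g hg
end

section
/- Let μ, σ > 0, γ > 0, 0 ≤ λ ≤ μ, and let w be twice differentiable on an open interval I and satisfy the Riccati ODE with parameters (μ, σ, γ, λ) on I. If y₀ ∈ I satisfies w(y₀) ≠ 1 and w'(y₀) = w(y₀)·(1 − w(y₀)), then the function w̃(y) = w(y) − w'(y)/(1 − w(y)) is differentiable at y₀ with w̃'(y₀) = 2γ·w(y₀)·(μ/(γσ²) − w(y₀)). -/
/-!
Along a solution of a Riccati equation `w' = a + b w + c w²` the second derivative is
`w'' = (b + 2 c w) w'`, so the quotient rule expresses `(w - w' / (1 - w))'` through `w` and `w'`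
alone. Where `w' = w (1 - w)` this collapses to `w ((1 - b) - 2 (1 + c) w)`, which for the
coefficients of the equation at hand is `2γ w (μ / (γσ²) - w)`.
-/

open Filter Topology

theorem HasDerivAt.sub_div_one_sub {w v : ℝ → ℝ} {v' y₀ : ℝ}
    (hw : HasDerivAt w (v y₀) y₀) (hv : HasDerivAt v v' y₀) (hne : w y₀ ≠ 1) :
    HasDerivAt (fun y => w y - v y / (1 - w y))
      (v y₀ - (v' * (1 - w y₀) + v y₀ ^ 2) / (1 - w y₀) ^ 2) y₀ := by
  have hquot := hv.div (hw.const_sub 1) (sub_ne_zero.mpr hne.symm)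
  exact (hw.sub hquot).congr_deriv (by ring)

theorem hasDerivAt_of_eventually_eq_quadratic {w w' : ℝ → ℝ} {a b c y₀ : ℝ}
    (hw : HasDerivAt w (w' y₀) y₀)
    (hode : ∀ᶠ y in 𝓝 y₀, w' y = a + b * w y + c * w y ^ 2) :
    HasDerivAt w' ((b + 2 * c * w y₀) * w' y₀) y₀ := by
  have hquad : HasDerivAt (fun x : ℝ => a + b * x + c * x ^ 2) (b + 2 * c * w y₀) (w y₀) := by
    refine ((((hasDerivAt_id _).const_mul b).const_add a).add
      (((hasDerivAt_id _).pow 2).const_mul c)).congr_deriv ?_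
    simp only [Nat.cast_ofNat]
    ring
  exact (hquad.comp y₀ hw).congr_of_eventuallyEq hode

theorem riccati_hasDerivAt_sub_div_one_sub {w w' : ℝ → ℝ} {a b c y₀ : ℝ}
    (hw : HasDerivAt w (w' y₀) y₀)
    (hode : ∀ᶠ y in 𝓝 y₀, w' y = a + b * w y + c * w y ^ 2)
    (hne : w y₀ ≠ 1) (hzero : w' y₀ = w y₀ * (1 - w y₀)) :
    HasDerivAt (fun y => w y - w' y / (1 - w y)) (w y₀ * (1 - b - 2 * (1 + c) * w y₀)) y₀ := by
  convert hw.sub_div_one_sub (hasDerivAt_of_eventually_eq_quadratic hw hode) hne using 1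
  have hden : 1 - w y₀ ≠ 0 := sub_ne_zero.mpr hne.symm
  rw [hzero]
  field_simp
  ring

theorem wtilde_derivative_at_zero_general (μ σ γ lam c d y₀ : ℝ)
    (hγ : 0 < γ)
    (w w' : ℝ → ℝ)
    (hderiv : ∀ y ∈ Set.Ioo c d, HasDerivAt w (w' y) y)
    (hode : ∀ y ∈ Set.Ioo c d,
      w' y + (1 - γ) * (w y) ^ 2 + (2 * μ / σ ^ 2 - 1) * (w y)
        - (μ ^ 2 - lam ^ 2) / (γ * σ ^ 4) = 0)
    (hy₀ : y₀ ∈ Set.Ioo c d)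
    (hne : w y₀ ≠ 1)
    (hzero : w' y₀ = w y₀ * (1 - w y₀)) :
    HasDerivAt (fun y => w y - w' y / (1 - w y))
      (2 * γ * w y₀ * (μ / (γ * σ ^ 2) - w y₀)) y₀ := by
  have hriccati : ∀ᶠ y in 𝓝 y₀, w' y = (μ ^ 2 - lam ^ 2) / (γ * σ ^ 4)
      + (1 - 2 * μ / σ ^ 2) * w y + (γ - 1) * w y ^ 2 := by
    filter_upwards [isOpen_Ioo.mem_nhds hy₀] with y hy
    linarith [hode y hy]
  convert riccati_hasDerivAt_sub_div_one_sub (hderiv y₀ hy₀) hriccati hne hzero using 1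
  field_simp
  ring

/-- at a point where `w̃ = w − w'/(1 − w)` vanishes (i.e. where
`w' = w(1 − w)`), the derivative of `w̃` equals `2γ·w·(μ/(γσ²) − w)`, for `w`
a solution of the Riccati ODE `w' + (1−γ)w² + (2μ/σ² − 1)w − (μ² − λ²)/(γσ⁴) = 0`
on an open interval. -/
theorem wtilde_derivative_at_zero (μ σ γ lam c d y₀ : ℝ)
    (hμ : 0 < μ) (hσ : 0 < σ) (hγ : 0 < γ)
    (hlam0 : 0 ≤ lam) (hlamμ : lam ≤ μ)
    (w w' w'' : ℝ → ℝ)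
    (hderiv : ∀ y ∈ Set.Ioo c d, HasDerivAt w (w' y) y)
    (hderiv2 : ∀ y ∈ Set.Ioo c d, HasDerivAt w' (w'' y) y)
    (hode : ∀ y ∈ Set.Ioo c d,
      w' y + (1 - γ) * (w y) ^ 2 + (2 * μ / σ ^ 2 - 1) * (w y)
        - (μ ^ 2 - lam ^ 2) / (γ * σ ^ 4) = 0)
    (hy₀ : y₀ ∈ Set.Ioo c d)
    (hne : w y₀ ≠ 1)
    (hzero : w' y₀ = w y₀ * (1 - w y₀)) :
    HasDerivAt (fun y => w y - w' y / (1 - w y))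
      (2 * γ * w y₀ * (μ / (γ * σ ^ 2) - w y₀)) y₀ :=
  wtilde_derivative_at_zero_general μ σ γ lam c d y₀ hγ w w' hderiv hode hy₀ hne hzero
end

section
/- Let μ, σ > 0, γ > 0 with μ/(γσ²) ∈ (0,1), 0 < λ < μ, and L > 0. Set p = (μ−λ)/(γσ²), q = (μ+λ)/(γσ²), and assume 0 < p < μ/(γσ²) < q < 1. Suppose w is twice continuously differentiable on [0, L], satisfies the Riccati ODE with parameters (μ, σ, γ, λ) on [0, L], is strictly increasing with w(0) = p and w(L) = q, and w(y) < 1 for all y ∈ [0, L]. Then the function w̃(y) = w(y) − w'(y)/(1 − w(y)) satisfies w̃(y) ≥ 0 for all y ∈ [0, L], and w̃(0) = w̃(L) = 0. -/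
/-! With `p, q` the roots `(μ ∓ λ)/(γσ²)`, the Riccati equation reads
`w' = w(1 - w) + γ(w - p)(w - q)`, so `w̃ = w - w'/(1 - w) = -γ(w - p)(w - q)/(1 - w)`.
Monotonicity keeps `w` between `w 0 = p` and `w L = q`, where the numerator is `≥ 0`,
and it vanishes at the endpoints. -/

section Algebra

variable {K : Type*} [Field K]

theorem riccati_residual_eq_sub_factored {μ σ γ lam v v' : K} (hγ : γ ≠ 0) :
    v' + (1 - γ) * v ^ 2 + (2 * μ / σ ^ 2 - 1) * v - (μ ^ 2 - lam ^ 2) / (γ * σ ^ 4) =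
      v' - (v * (1 - v) +
        γ * (v - (μ - lam) / (γ * σ ^ 2)) * (v - (μ + lam) / (γ * σ ^ 2))) := by
  simp only [div_eq_mul_inv, mul_inv]
  linear_combination ((μ ^ 2 - lam ^ 2) * (σ ^ 2)⁻¹ ^ 2 * γ⁻¹ - v * (2 * μ * (σ ^ 2)⁻¹))
    * mul_inv_cancel₀ hγ

theorem sub_div_one_sub_of_eq_mul_one_sub_add {v v' r : K} (hv : v ≠ 1)
    (h : v' = v * (1 - v) + r) : v - v' / (1 - v) = -r / (1 - v) := by
  have : 1 - v ≠ 0 := sub_ne_zero.2 hv.symm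
  rw [h]
  field_simp
  ring

theorem neg_mul_sub_mul_sub_div_nonneg [LinearOrder K] [IsStrictOrderedRing K] {γ p q v : K}
    (hγ : 0 ≤ γ) (hv : v ∈ Set.Icc p q) (hv1 : v < 1) : 0 ≤ -(γ * (v - p) * (v - q)) / (1 - v) := by
  have hpq : (v - p) * (v - q) ≤ 0 :=
    mul_nonpos_of_nonneg_of_nonpos (sub_nonneg.2 hv.1) (sub_nonpos.2 hv.2)
  rw [mul_assoc]
  exact div_nonneg (neg_nonneg.2 (mul_nonpos_of_nonneg_of_nonpos hγ hpq)) (by linarith)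

end Algebra

theorem wtilde_nonneg_general (μ σ γ lam L : ℝ)
    (hγ : 0 < γ)
    (hLpos : 0 < L)
    (p q : ℝ)
    (hp : p = (μ - lam) / (γ * σ ^ 2)) (hq : q = (μ + lam) / (γ * σ ^ 2))
    (w w' : ℝ → ℝ)
    (hode : ∀ y ∈ Set.Icc (0 : ℝ) L,
      w' y + (1 - γ) * (w y) ^ 2 + (2 * μ / σ ^ 2 - 1) * (w y)
        - (μ ^ 2 - lam ^ 2) / (γ * σ ^ 4) = 0)
    (hmono : StrictMonoOn w (Set.Icc (0 : ℝ) L))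
    (hw0 : w 0 = p) (hwL : w L = q)
    (hwlt : ∀ y ∈ Set.Icc (0 : ℝ) L, w y < 1) :
    (∀ y ∈ Set.Icc (0 : ℝ) L, 0 ≤ w y - w' y / (1 - w y)) ∧
    w 0 - w' 0 / (1 - w 0) = 0 ∧ w L - w' L / (1 - w L) = 0 := by
  have hwtilde : ∀ y ∈ Set.Icc (0 : ℝ) L,
      w y - w' y / (1 - w y) = -(γ * (w y - p) * (w y - q)) / (1 - w y) := by
    intro y hy
    refine sub_div_one_sub_of_eq_mul_one_sub_add (hwlt y hy).ne ?_
    have h := hode y hy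
    rw [riccati_residual_eq_sub_factored hγ.ne', ← hp, ← hq] at h
    exact sub_eq_zero.1 h
  have hrange : Set.MapsTo w (Set.Icc 0 L) (Set.Icc p q) :=
    hw0 ▸ hwL ▸ hmono.monotoneOn.mapsTo_Icc
  have h0 : (0 : ℝ) ∈ Set.Icc 0 L := Set.left_mem_Icc.2 hLpos.le
  have hL : L ∈ Set.Icc 0 L := Set.right_mem_Icc.2 hLpos.le
  refine ⟨fun y hy => ?_, ?_, ?_⟩
  · rw [hwtilde y hy]
    exact neg_mul_sub_mul_sub_div_nonneg hγ.le (hrange hy) (hwlt y hy)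
  · rw [hwtilde 0 h0, hw0]
    simp
  · rw [hwtilde L hL, hwL]
    simp

/-- in the no-leverage case `μ/(γσ²) ∈ (0,1)`, the function
`w̃ = w − w'/(1 − w)` is nonnegative on `[0, L]` and vanishes at both endpoints,
for `w` a strictly increasing solution of the Riccati ODE
`w' + (1−γ)w² + (2μ/σ² − 1)w − (μ² − λ²)/(γσ⁴) = 0` with the stated boundary
values. -/
theorem wtilde_nonneg (μ σ γ lam L : ℝ)
    (hμ : 0 < μ) (hσ : 0 < σ) (hγ : 0 < γ)
    (hmerton : μ / (γ * σ ^ 2) ∈ Set.Ioo (0 : ℝ) 1)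
    (hlam0 : 0 < lam) (hlamμ : lam < μ) (hLpos : 0 < L)
    (p q : ℝ)
    (hp : p = (μ - lam) / (γ * σ ^ 2)) (hq : q = (μ + lam) / (γ * σ ^ 2))
    (hp0 : 0 < p) (hpm : p < μ / (γ * σ ^ 2)) (hmq : μ / (γ * σ ^ 2) < q) (hq1 : q < 1)
    (w w' w'' : ℝ → ℝ)
    (hderiv : ∀ y ∈ Set.Icc (0 : ℝ) L, HasDerivWithinAt w (w' y) (Set.Icc (0 : ℝ) L) y)
    (hderiv2 : ∀ y ∈ Set.Icc (0 : ℝ) L, HasDerivWithinAt w' (w'' y) (Set.Icc (0 : ℝ) L) y)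
    (hcont2 : ContinuousOn w'' (Set.Icc (0 : ℝ) L))
    (hode : ∀ y ∈ Set.Icc (0 : ℝ) L,
      w' y + (1 - γ) * (w y) ^ 2 + (2 * μ / σ ^ 2 - 1) * (w y)
        - (μ ^ 2 - lam ^ 2) / (γ * σ ^ 4) = 0)
    (hmono : StrictMonoOn w (Set.Icc (0 : ℝ) L))
    (hw0 : w 0 = p) (hwL : w L = q)
    (hwlt : ∀ y ∈ Set.Icc (0 : ℝ) L, w y < 1) :
    (∀ y ∈ Set.Icc (0 : ℝ) L, 0 ≤ w y - w' y / (1 - w y)) ∧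
    w 0 - w' 0 / (1 - w 0) = 0 ∧ w L - w' L / (1 - w L) = 0 :=
  wtilde_nonneg_general μ σ γ lam L hγ hLpos p q hp hq w w' hode hmono hw0 hwL hwlt
end

section
/- Let μ, σ > 0, γ > 0 with γ ≠ 1 and 0 < μ/(γσ²) ≠ 1, and let λ(ε) for small ε > 0 be the unique small positive solution of the shadow boundary equation w(λ, log(u(λ,ε)/l(λ))) = (μ+λ)/(γσ²), which satisfies |λ(ε) − γσ²·((3/(4γ))·(μ/(γσ²))²·(1−μ/(γσ²))²)^{1/3}·ε^{1/3}| ≤ C₀·ε for some constant C₀. Define the equivalent excess safe rate β(ε) = (μ² − λ(ε)²)/(2γσ²). Then there exist ε₀ > 0 and C > 0 such that for all ε ∈ (0, ε₀): | β(ε) − μ²/(2γσ²) + (γσ²/2)·( (3/(4γ))·(μ/(γσ²))²·(1 − μ/(γσ²))² )^{2/3}·ε^{2/3} | ≤ C·ε^{4/3}. -/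
/-- Hyperbolic cotangent. -/
noncomputable def coth (x : ℝ) : ℝ := Real.cosh x / Real.sinh x

/-- Inverse hyperbolic cotangent, defined for `|x| > 1`. -/
noncomputable def arcoth (x : ℝ) : ℝ := (1 / 2) * Real.log ((x + 1) / (x - 1))

/-- The explicit solution `w(λ, ·)` of the Riccati ODE
`w' + (1−γ)w² + (2μ/σ² − 1)w − (μ² − λ²)/(γσ⁴) = 0` with
`w(λ, 0) = (μ−λ)/(γσ²)`. -/
noncomputable def riccatiSol (μ σ γ lam : ℝ) : ℝ → ℝ := fun y =>
  let D : ℝ := (γ - 1) * (μ ^ 2 - lam ^ 2) / (γ * σ ^ 4) - (1 / 2 - μ / σ ^ 2) ^ 2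
  let a : ℝ := Real.sqrt |D|
  let b : ℝ := 1 / 2 - μ / σ ^ 2 + (γ - 1) * (μ - lam) / (γ * σ ^ 2)
  if 0 < D then
    (a * Real.tan (Real.arctan (b / a) + a * y) + (μ / σ ^ 2 - 1 / 2)) / (γ - 1)
  else if |b| < a then
    (a * Real.tanh (artanh (b / a) - a * y) + (μ / σ ^ 2 - 1 / 2)) / (γ - 1)
  else
    (a * coth (arcoth (b / a) - a * y) + (μ / σ ^ 2 - 1 / 2)) / (γ - 1)

/-- Buy boundary of the no-trade region for the stock-cash ratio. -/
noncomputable def buyBoundary (μ σ γ lam : ℝ) : ℝ := (μ - lam) / (γ * σ ^ 2 - (μ - lam))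

/-- Sell boundary of the no-trade region for the stock-cash ratio. -/
noncomputable def sellBoundary (μ σ γ lam ε : ℝ) : ℝ :=
  (1 / (1 - ε)) * ((μ + lam) / (γ * σ ^ 2 - (μ + lam)))

/-!
The subtracted correction term is `λ₀²/(2γσ²)`, where `λ₀ = O(ε^{1/3})` is the leading term
of `λ`, so the error in the expansion of `β` is `-(λ² - λ₀²)/(2γσ²)`. Since `λ - λ₀ = O(ε)`
and `λ + λ₀ = O(ε^{1/3})`, this difference of squares is `O(ε^{4/3})`.
-/

lemma abs_sq_sub_sq_le_of_abs_sub_le {x y δ : ℝ} (h : |y - x| ≤ δ) :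
    |y ^ 2 - x ^ 2| ≤ δ * (2 * |x| + δ) := by
  have hsum : |y + x| ≤ 2 * |x| + δ :=
    calc |y + x| = |(y - x) + 2 * x| := by ring_nf
      _ ≤ |y - x| + 2 * |x| := by
        grw [abs_add_le, abs_mul, abs_two]
      _ ≤ 2 * |x| + δ := by linarith
  rw [sq_sub_sq, abs_mul, mul_comm]
  exact mul_le_mul h hsum (abs_nonneg _) ((abs_nonneg _).trans h)

lemma Real.rpow_two_div_three {x : ℝ} (hx : 0 ≤ x) :
    x ^ ((2 : ℝ) / 3) = (x ^ ((1 : ℝ) / 3)) ^ 2 := by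
  rw [← Real.rpow_mul_natCast hx]
  norm_num

lemma abs_sq_sub_sq_le_of_abs_sub_cbrt_le {y a c ε : ℝ} (hε0 : 0 < ε) (hε1 : ε ≤ 1)
    (h : |y - a * ε ^ ((1 : ℝ) / 3)| ≤ c * ε) :
    |y ^ 2 - a ^ 2 * ε ^ ((2 : ℝ) / 3)| ≤ (2 * |a| * c + c ^ 2) * ε ^ ((4 : ℝ) / 3) := by
  have hε13 : 0 ≤ ε ^ ((1 : ℝ) / 3) := by positivity
  have hmul : ε * ε ^ ((1 : ℝ) / 3) = ε ^ ((4 : ℝ) / 3) := by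
    rw [← Real.rpow_one_add' hε0.le (by norm_num)]
    norm_num
  have hsq : ε ^ 2 ≤ ε ^ ((4 : ℝ) / 3) := by
    rw [← Real.rpow_natCast]
    exact Real.rpow_le_rpow_of_exponent_ge hε0 hε1 (by norm_num)
  calc |y ^ 2 - a ^ 2 * ε ^ ((2 : ℝ) / 3)|
      = |y ^ 2 - (a * ε ^ ((1 : ℝ) / 3)) ^ 2| := by
        rw [Real.rpow_two_div_three hε0.le, mul_pow]
    _ ≤ c * ε * (2 * |a * ε ^ ((1 : ℝ) / 3)| + c * ε) := abs_sq_sub_sq_le_of_abs_sub_le h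
    _ = 2 * |a| * c * (ε * ε ^ ((1 : ℝ) / 3)) + c ^ 2 * ε ^ 2 := by
        rw [abs_mul, abs_of_nonneg hε13]
        ring
    _ ≤ (2 * |a| * c + c ^ 2) * ε ^ ((4 : ℝ) / 3) := by
        rw [hmul]
        nlinarith [mul_le_mul_of_nonneg_left hsq (sq_nonneg c)]

theorem equivalent_safe_rate_asymptotics_general (μ σ γ : ℝ)
    (hσ : 0 < σ) (hγ : 0 < γ)
    (lam : ℝ → ℝ) (ε₁ C₀ : ℝ) (hC₀ : 0 < C₀)
    (hlam : ∀ ε ∈ Set.Ioo (0 : ℝ) ε₁,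
      0 < lam ε ∧ lam ε < μ ∧
      riccatiSol μ σ γ (lam ε)
          (Real.log (sellBoundary μ σ γ (lam ε) ε / buyBoundary μ σ γ (lam ε)))
        = (μ + lam ε) / (γ * σ ^ 2) ∧
      |lam ε - γ * σ ^ 2 *
          ((3 / (4 * γ)) * (μ / (γ * σ ^ 2)) ^ 2 * (1 - μ / (γ * σ ^ 2)) ^ 2)
            ^ ((1 : ℝ) / 3) * ε ^ ((1 : ℝ) / 3)| ≤ C₀ * ε)
    (β : ℝ → ℝ)
    (hβ : ∀ ε : ℝ, β ε = (μ ^ 2 - (lam ε) ^ 2) / (2 * γ * σ ^ 2)) :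
    ∃ ε₀ > (0 : ℝ), ∃ C > (0 : ℝ), ∀ ε ∈ Set.Ioo (0 : ℝ) (min ε₀ ε₁),
      |β ε - μ ^ 2 / (2 * γ * σ ^ 2)
        + (γ * σ ^ 2 / 2) *
            ((3 / (4 * γ)) * (μ / (γ * σ ^ 2)) ^ 2 * (1 - μ / (γ * σ ^ 2)) ^ 2)
              ^ ((2 : ℝ) / 3) * ε ^ ((2 : ℝ) / 3)|
        ≤ C * ε ^ ((4 : ℝ) / 3) := by
  set K := (3 / (4 * γ)) * (μ / (γ * σ ^ 2)) ^ 2 * (1 - μ / (γ * σ ^ 2)) ^ 2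
  set A := γ * σ ^ 2 * K ^ ((1 : ℝ) / 3)
  have hs : 0 < 2 * γ * σ ^ 2 := by positivity
  refine ⟨1, one_pos, (2 * |A| * C₀ + C₀ ^ 2) / (2 * γ * σ ^ 2), by positivity, ?_⟩
  rintro ε ⟨hε0, hε⟩
  obtain ⟨-, -, -, hlead⟩ := hlam ε ⟨hε0, hε.trans_le (min_le_right _ _)⟩
  have hdefect : β ε - μ ^ 2 / (2 * γ * σ ^ 2)
        + (γ * σ ^ 2 / 2) * K ^ ((2 : ℝ) / 3) * ε ^ ((2 : ℝ) / 3)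
      = -(lam ε ^ 2 - A ^ 2 * ε ^ ((2 : ℝ) / 3)) / (2 * γ * σ ^ 2) := by
    rw [hβ, Real.rpow_two_div_three (by positivity : 0 ≤ K)]
    field_simp
    ring
  rw [hdefect, abs_div, abs_neg, abs_of_pos hs, div_mul_eq_mul_div]
  refine div_le_div_of_nonneg_right ?_ hs.le
  exact abs_sq_sub_sq_le_of_abs_sub_cbrt_le hε0 (hε.trans_le (min_le_left _ _)).le hlead

/-- second-order asymptotics of the equivalent excess safe rate
`β(ε) = (μ² − λ(ε)²)/(2γσ²)`, where `λ(ε)` is the unique small positive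
solution of the shadow boundary equation, with first-order asymptotics
`λ(ε) = γσ²·((3/(4γ))·(μ/(γσ²))²·(1−μ/(γσ²))²)^{1/3}·ε^{1/3} + O(ε)`. -/
theorem equivalent_safe_rate_asymptotics (μ σ γ : ℝ)
    (hμ : 0 < μ) (hσ : 0 < σ) (hγ : 0 < γ) (hγ1 : γ ≠ 1)
    (hm0 : 0 < μ / (γ * σ ^ 2)) (hm1 : μ / (γ * σ ^ 2) ≠ 1)
    (lam : ℝ → ℝ) (ε₁ C₀ : ℝ) (hε₁ : 0 < ε₁) (hC₀ : 0 < C₀)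
    (hlam : ∀ ε ∈ Set.Ioo (0 : ℝ) ε₁,
      0 < lam ε ∧ lam ε < μ ∧
      riccatiSol μ σ γ (lam ε)
          (Real.log (sellBoundary μ σ γ (lam ε) ε / buyBoundary μ σ γ (lam ε)))
        = (μ + lam ε) / (γ * σ ^ 2) ∧
      |lam ε - γ * σ ^ 2 *
          ((3 / (4 * γ)) * (μ / (γ * σ ^ 2)) ^ 2 * (1 - μ / (γ * σ ^ 2)) ^ 2)
            ^ ((1 : ℝ) / 3) * ε ^ ((1 : ℝ) / 3)| ≤ C₀ * ε)
    (β : ℝ → ℝ)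
    (hβ : ∀ ε : ℝ, β ε = (μ ^ 2 - (lam ε) ^ 2) / (2 * γ * σ ^ 2)) :
    ∃ ε₀ > (0 : ℝ), ∃ C > (0 : ℝ), ∀ ε ∈ Set.Ioo (0 : ℝ) (min ε₀ ε₁),
      |β ε - μ ^ 2 / (2 * γ * σ ^ 2)
        + (γ * σ ^ 2 / 2) *
            ((3 / (4 * γ)) * (μ / (γ * σ ^ 2)) ^ 2 * (1 - μ / (γ * σ ^ 2)) ^ 2)
              ^ ((2 : ℝ) / 3) * ε ^ ((2 : ℝ) / 3)|
        ≤ C * ε ^ ((4 : ℝ) / 3) :=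
  equivalent_safe_rate_asymptotics_general μ σ γ hσ hγ lam ε₁ C₀ hC₀ hlam β hβ
end

section
/- Let μ, σ > 0, γ > 0 with γ ≠ 1, 0 ≤ λ ≤ μ, and β = (μ² − λ²)/(2γσ²). Let 0 < z₁ < z₂, let v : (z₁, z₂) → ℝ be twice differentiable with v(z) > 0 for all z, and suppose v satisfies (σ²/2)·z²·v''(z) + μ·z·v'(z) − (1−γ)·β·v(z) = 0 on (z₁, z₂). Fix l ∈ (z₁, z₂) and define w(y) = l·e^{y}·v'(l·e^{y}) / ((1−γ)·v(l·e^{y})) for all y with l·e^{y} ∈ (z₁, z₂). Then w satisfies the Riccati ODE with parameters (μ, σ, γ, λ): w'(y) + (1−γ)·w(y)² + (2μ/σ² − 1)·w(y) − (μ² − λ²)/(γσ⁴) = 0, at every such y. -/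
/-!
In the Euler variable `y = log (z / l)` the function `V(y) = v(l eʸ)` satisfies the
constant-coefficient equation `(σ²/2) V'' + (μ − σ²/2) V' − (1−γ)β V = 0`, and `w` is
`V' / ((1−γ) V)`. The logarithmic derivative `u = V'/V` of a nonvanishing solution of
`a V'' + b V' + c V = 0` satisfies `u' = V''/V − u²`, so dividing the equation by `a V`
turns it into a Riccati equation for `u`, hence for `w`.
-/

open Real

section LogDerivative

variable {𝕜 : Type*} [NontriviallyNormedField 𝕜]

theorem hasDerivAt_logDeriv_of_hasDerivAt {p V : 𝕜 → 𝕜} {p' y : 𝕜}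
    (hp : HasDerivAt p p' y) (hV : HasDerivAt V (p y) y) (hV0 : V y ≠ 0) :
    HasDerivAt (fun t => p t / V t) (p' / V y - (p y / V y) ^ 2) y := by
  refine (hp.fun_div hV hV0).congr_deriv ?_
  field_simp

theorem riccati_of_linear_ode {p V : 𝕜 → 𝕜} {p' y a b c k : 𝕜} (ha : a ≠ 0) (hk : k ≠ 0)
    (hp : HasDerivAt p p' y) (hV : HasDerivAt V (p y) y) (hV0 : V y ≠ 0)
    (hode : a * p' + b * p y + c * V y = 0) :
    deriv (fun t => p t / (k * V t)) y + k * (p y / (k * V y)) ^ 2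
      + b / a * (p y / (k * V y)) + c / (a * k) = 0 := by
  have hw : HasDerivAt (fun t => p t / (k * V t)) ((p' / V y - (p y / V y) ^ 2) / k) y := by
    simpa only [div_mul_eq_div_div_swap] using
      (hasDerivAt_logDeriv_of_hasDerivAt hp hV hV0).div_const k
  rw [hw.deriv]
  field_simp
  linear_combination V y * hode

end LogDerivative

section EulerVariable

variable {v : ℝ → ℝ} {l y : ℝ}

theorem hasDerivAt_comp_const_mul_exp (hv : DifferentiableAt ℝ v (l * exp y)) :
    HasDerivAt (fun t => v (l * exp t)) (l * exp y * deriv v (l * exp y)) y := by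
  have hexp : HasDerivAt (fun t => l * exp t) (l * exp y) y := (hasDerivAt_exp y).const_mul l
  exact (hv.hasDerivAt.comp y hexp).congr_deriv (mul_comm _ _)

theorem hasDerivAt_mul_deriv_comp_const_mul_exp
    (hv' : DifferentiableAt ℝ (deriv v) (l * exp y)) :
    HasDerivAt (fun t => l * exp t * deriv v (l * exp t))
      (l * exp y * deriv v (l * exp y) + (l * exp y) ^ 2 * deriv (deriv v) (l * exp y)) y := by
  have hexp : HasDerivAt (fun t => l * exp t) (l * exp y) y := (hasDerivAt_exp y).const_mul l
  exact (hexp.mul (hasDerivAt_comp_const_mul_exp hv')).congr_deriv (by ring)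

end EulerVariable

theorem hjb_to_riccati_general (μ σ γ lam β z₁ z₂ l : ℝ)
    (hσ : 0 < σ) (hγ1 : γ ≠ 1)
    (hβ : β = (μ ^ 2 - lam ^ 2) / (2 * γ * σ ^ 2))
    (v : ℝ → ℝ)
    (hv : ∀ z ∈ Set.Ioo z₁ z₂, DifferentiableAt ℝ v z)
    (hv' : ∀ z ∈ Set.Ioo z₁ z₂, DifferentiableAt ℝ (deriv v) z)
    (hvpos : ∀ z ∈ Set.Ioo z₁ z₂, 0 < v z)
    (hode : ∀ z ∈ Set.Ioo z₁ z₂,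
      (σ ^ 2 / 2) * z ^ 2 * deriv (deriv v) z + μ * z * deriv v z
        - (1 - γ) * β * v z = 0)
    (w : ℝ → ℝ)
    (hw : w = fun y => l * Real.exp y * deriv v (l * Real.exp y) /
      ((1 - γ) * v (l * Real.exp y))) :
    ∀ y : ℝ, l * Real.exp y ∈ Set.Ioo z₁ z₂ →
      deriv w y + (1 - γ) * (w y) ^ 2 + (2 * μ / σ ^ 2 - 1) * (w y)
        - (μ ^ 2 - lam ^ 2) / (γ * σ ^ 4) = 0 := by
  intro y hz
  have hσ2 : σ ^ 2 / 2 ≠ 0 := by positivity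
  have hγ1' : 1 - γ ≠ 0 := sub_ne_zero.mpr hγ1.symm
  have hriccati := riccati_of_linear_ode (b := μ - σ ^ 2 / 2) (c := -((1 - γ) * β)) hσ2 hγ1'
    (hasDerivAt_mul_deriv_comp_const_mul_exp (hv' _ hz))
    (hasDerivAt_comp_const_mul_exp (hv _ hz)) (hvpos _ hz).ne'
    (by linear_combination hode _ hz)
  have hb : (μ - σ ^ 2 / 2) / (σ ^ 2 / 2) = 2 * μ / σ ^ 2 - 1 := by
    field_simp
  have hc : -((1 - γ) * β) / (σ ^ 2 / 2 * (1 - γ)) = -((μ ^ 2 - lam ^ 2) / (γ * σ ^ 4)) := by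
    rw [hβ]
    field_simp [hγ1']
  subst hw
  rw [hb, hc] at hriccati
  linear_combination hriccati

/-- the logarithmic change of variable
`w(y) = l·e^y·v'(l·e^y)/((1−γ)·v(l·e^y))` transforms a positive solution of the
second-order linear HJB ODE `(σ²/2)z²v'' + μzv' − (1−γ)βv = 0` (with
`β = (μ²−λ²)/(2γσ²)`) into a solution of the Riccati ODE
`w' + (1−γ)w² + (2μ/σ² − 1)w − (μ²−λ²)/(γσ⁴) = 0`. -/
theorem hjb_to_riccati (μ σ γ lam β z₁ z₂ l : ℝ)
    (hμ : 0 < μ) (hσ : 0 < σ) (hγ : 0 < γ) (hγ1 : γ ≠ 1)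
    (hlam0 : 0 ≤ lam) (hlamμ : lam ≤ μ)
    (hβ : β = (μ ^ 2 - lam ^ 2) / (2 * γ * σ ^ 2))
    (hz₁ : 0 < z₁) (hz₁₂ : z₁ < z₂)
    (v : ℝ → ℝ)
    (hv : ∀ z ∈ Set.Ioo z₁ z₂, DifferentiableAt ℝ v z)
    (hv' : ∀ z ∈ Set.Ioo z₁ z₂, DifferentiableAt ℝ (deriv v) z)
    (hvpos : ∀ z ∈ Set.Ioo z₁ z₂, 0 < v z)
    (hode : ∀ z ∈ Set.Ioo z₁ z₂,
      (σ ^ 2 / 2) * z ^ 2 * deriv (deriv v) z + μ * z * deriv v z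
        - (1 - γ) * β * v z = 0)
    (hl : l ∈ Set.Ioo z₁ z₂)
    (w : ℝ → ℝ)
    (hw : w = fun y => l * Real.exp y * deriv v (l * Real.exp y) /
      ((1 - γ) * v (l * Real.exp y))) :
    ∀ y : ℝ, l * Real.exp y ∈ Set.Ioo z₁ z₂ →
      deriv w y + (1 - γ) * (w y) ^ 2 + (2 * μ / σ ^ 2 - 1) * (w y)
        - (μ ^ 2 - lam ^ 2) / (γ * σ ^ 4) = 0 :=
  hjb_to_riccati_general μ σ γ lam β z₁ z₂ l hσ hγ1 hβ v hv hv' hvpos hode w hw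
end
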